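/- arXiv:2009.03725 — 2 statements merged into one kernel-verified Lean document; each statement's English description precedes it below -/
import Mathlib

section
/- Define S(a_1,...,a_m) := R(Δ(a_1,...,a_m;t))·(T−1) ∈ K for vectors with coordinates in {0,1,2}. Then S satisfies: S(a_1,...,a_m) = −S(a_1,...,a_{m−2})·T if a_m = 0; S(a_1,...,a_m) = S(a_1,...,a_{m−1})·T + S(a_1,...,a_{m−2})·(T+1) if a_m = 1; and S(a_1,...,a_m) = −S(a_1,...,a_{m−1}) − S(a_1,...,a_{m−2}) if a_m = 2. -/
open Polynomial

/-- The sum of coefficients of `g` over exponents `≡ i (mod 3)`. -/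
noncomputable def Rcoef (i : ℕ) (g : Polynomial ℤ) : ℤ :=
  ∑ h ∈ g.support.filter (fun h => h % 3 = i), g.coeff h

/-- The ring `K = ℤ[T]/(T^3 - 1)`. -/
abbrev K3 := Polynomial ℤ ⧸ Ideal.span {(X : Polynomial ℤ) ^ 3 - 1}

/-- The quotient map `ℤ[T] → K`. -/
noncomputable def mk3 : Polynomial ℤ →+* K3 := Ideal.Quotient.mk _

/-- The map `R = R^{(3)} : ℤ[t] → K`, `g ↦ R_0(g) + R_1(g)T + R_2(g)T^2`. -/
noncomputable def Rmap3 (g : Polynomial ℤ) : K3 :=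
  mk3 (C (Rcoef 0 g)) + mk3 (C (Rcoef 1 g)) * mk3 X + mk3 (C (Rcoef 2 g)) * mk3 X ^ 2

/-- `a + bT + cT²` is special if `a = b = c` or `|a-b|+|a-c|+|b-c| = 2`. -/
def Special (a b c : ℤ) : Prop :=
  (a = b ∧ b = c) ∨ |a - b| + |a - c| + |b - c| = 2

/-- `Δ(a;t) = t + t² + ⋯ + tᵃ` (with `Δ(0;t) = 0`). -/
noncomputable def Delta1 (a : ℕ) : Polynomial ℤ := ∑ h ∈ Finset.Icc 1 a, X ^ h

/-- `Δ(A;t)` computed from the reversed list (last coordinate first). -/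
noncomputable def DeltaRev : List ℕ → Polynomial ℤ
  | [] => 1
  | [a] => Delta1 a
  | a :: b :: rest => DeltaRev (b :: rest) * Delta1 a - DeltaRev rest * X ^ (a + 1)

/-- `Δ(a₁,…,a_m;t)`, defined by `Δ(∅)=1`, `Δ(A,a) = Δ(A)·Δ(a) - Δ(A')·t^{a+1}`. -/
noncomputable def Delta (A : List ℕ) : Polynomial ℤ := DeltaRev A.reverse

/-- `S(A) := R(Δ(A;t))·(T-1) ∈ K`. -/
noncomputable def Smap (A : List ℕ) : K3 := Rmap3 (Delta A) * (mk3 X - 1)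


lemma mk3_X_pow_three : (mk3 X) ^ 3 = 1 := by
  have h : mk3 ((X:Polynomial ℤ)^3 - 1) = 0 :=
    Ideal.Quotient.eq_zero_iff_mem.mpr (Ideal.subset_span rfl)
  have := sub_eq_zero.mp (by simpa [map_sub, map_pow] using h)
  simpa using this

lemma mk3_X_pow_mod (h : ℕ) : (mk3 X) ^ h = (mk3 X) ^ (h % 3) := by
  conv_lhs => rw [← Nat.div_add_mod h 3]
  rw [pow_add, pow_mul, mk3_X_pow_three, one_pow, one_mul]

lemma Rmap3_eq (g : Polynomial ℤ) : Rmap3 g = mk3 g := by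
  have key : ∑ i ∈ Finset.range 3, ∑ h ∈ g.support.filter (fun h => h % 3 = i),
      mk3 (C (g.coeff h)) * (mk3 X) ^ h = mk3 g := by
    rw [Finset.sum_fiberwise_of_maps_to (fun h _ => Finset.mem_range.mpr (Nat.mod_lt _ (by norm_num)))]
    conv_rhs => rw [g.as_sum_support]
    rw [map_sum]
    exact Finset.sum_congr rfl fun h _ => by
      rw [← C_mul_X_pow_eq_monomial, map_mul, map_pow]
  have fib : ∀ i, ∑ h ∈ g.support.filter (fun h => h % 3 = i),
      mk3 (C (g.coeff h)) * (mk3 X) ^ h = mk3 (C (Rcoef i g)) * (mk3 X) ^ i := by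
    intro i
    rw [Rcoef, map_sum, map_sum, Finset.sum_mul]
    exact Finset.sum_congr rfl fun h hh => by
      rw [mk3_X_pow_mod, (Finset.mem_filter.mp hh).2]
  rw [Rmap3, ← key]
  rw [Finset.sum_range_succ, Finset.sum_range_succ, Finset.sum_range_one, fib 0, fib 1, fib 2,
    pow_zero, mul_one, pow_one]

lemma Delta_append (B : List ℕ) (x y : ℕ) :
    Delta (B ++ [x, y]) = Delta (B ++ [x]) * Delta1 y - Delta B * X ^ (y + 1) := by
  simp [Delta, DeltaRev]

lemma Delta1_zero : Delta1 0 = 0 := by simp [Delta1]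
lemma Delta1_one : Delta1 1 = X := by simp [Delta1]
lemma Delta1_two : Delta1 2 = X + X ^ 2 := by
  rw [Delta1, show Finset.Icc 1 2 = {1, 2} from rfl]
  simp

theorem Smap_recurrence (B : List ℕ) (x y : ℕ)
    (hB : ∀ i ∈ B, i ≤ 2) (hx : x ≤ 2) (hy : y ≤ 2) :
    (y = 0 → Smap (B ++ [x, y]) = -(Smap B * mk3 X)) ∧
    (y = 1 → Smap (B ++ [x, y]) =
      Smap (B ++ [x]) * mk3 X + Smap B * (mk3 X + 1)) ∧
    (y = 2 → Smap (B ++ [x, y]) = -Smap (B ++ [x]) - Smap B) := by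
  refine ⟨fun h => ?_, fun h => ?_, fun h => ?_⟩ <;> subst h <;>
    simp only [Smap, Rmap3_eq, Delta_append, Delta1_zero, Delta1_one, Delta1_two,
      map_sub, map_mul, map_pow, map_add, map_zero, map_one]
  · ring
  · linear_combination (-(mk3 (Delta B))) * mk3_X_pow_three
  · linear_combination (mk3 (Delta (B ++ [x])) - mk3 (Delta B) * (mk3 X - 1)) * mk3_X_pow_three
end

section
/- For every positive integer n, (r_{3,0}(n) − r_{3,1}(n))·(r_{3,0}(n) − r_{3,2}(n))·(r_{3,1}(n) − r_{3,2}(n)) = 0; that is, at least two of the three counts r_{3,0}(n), r_{3,1}(n), r_{3,2}(n) are equal. -/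
/-- The Fibonacci numbers `f₁ = 1, f₂ = 2, fᵢ = fᵢ₋₁ + fᵢ₋₂` (value at `0` is junk). -/
def fibW : ℕ → ℕ
  | 0 => 0
  | 1 => 1
  | 2 => 2
  | (n + 3) => fibW (n + 2) + fibW (n + 1)

/-- `r d i n` is the number of partitions of `n` into distinct Fibonacci numbers
`f_j` (`j ≥ 1`) whose number of parts is `≡ i (mod d)`. -/
noncomputable def r (d i n : ℕ) : ℕ :=
  Nat.card {S : Finset ℕ // (∀ j ∈ S, 1 ≤ j) ∧ (∑ j ∈ S, fibW j) = n ∧ S.card % d = i}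

/-! ### Basic facts about `fibW` -/

lemma fibW_add (k : ℕ) : fibW (k+3) = fibW (k+2) + fibW (k+1) := rfl

theorem fibW_pos : ∀ k, 0 < fibW (k+1)
  | 0 => Nat.one_pos
  | 1 => by decide
  | (k+2) => by
      rw [show k+2+1 = k+3 from rfl, fibW_add]
      exact Nat.add_pos_left (fibW_pos (k+1)) _

theorem fibW_ge : ∀ k, k ≤ fibW k
  | 0 => by decide
  | 1 => by decide
  | 2 => by decide
  | (k+3) => by
      rw [fibW_add]
      have h1 := fibW_ge (k+2)
      have h2 := fibW_ge (k+1)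
      omega

lemma fibW_mono : Monotone fibW := by
  apply monotone_nat_of_le_succ
  intro k
  match k with
  | 0 => decide
  | 1 => decide
  | (k+2) =>
    rw [show k+2+1 = k+3 from rfl, fibW_add]
    exact Nat.le_add_right _ _

lemma fibW_sum : ∀ k, (∑ j ∈ Finset.Icc 1 k, fibW j) + 2 = fibW (k+2)
  | 0 => by decide
  | (k+1) => by
      rw [Finset.sum_Icc_succ_top (by omega : 1 ≤ k+1)]
      have := fibW_sum k
      rw [show k+1+2 = k+3 from rfl, fibW_add]
      omega

/-! ### The counting functions -/

open Finset

/-- Subsets of `{1, …, k}` whose `fibW`-sum is `m`. -/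
def Fset (k m : ℕ) : Finset (Finset ℕ) :=
  (Finset.Icc 1 k).powerset.filter fun S => ∑ j ∈ S, fibW j = m

/-- Count of members of `Fset k m` with cardinality `≡ i (mod 3)`. -/
def cnt (k m i : ℕ) : ℕ := ((Fset k m).filter fun S => S.card % 3 = i).card

/-- Coordinates (w.r.t. the basis `1, ω`) of `∑_S ω^{|S|}` in `ℤ[ω]/(1+ω+ω²)`. -/
def ph (k m : ℕ) : ℤ × ℤ :=
  ((cnt k m 0 : ℤ) - cnt k m 2, (cnt k m 1 : ℤ) - cnt k m 2)

/-- The stable (large-`k`) value of `ph`. -/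
def Phi (m : ℕ) : ℤ × ℤ := ph m m

/-- Multiplication by `ω`. -/
def rotP (p : ℤ × ℤ) : ℤ × ℤ := (-p.2, p.1 - p.2)

/-- The chain step map `w ↦ ω·y + ω·w`. -/
def st (y w : ℤ × ℤ) : ℤ × ℤ := rotP y + rotP w

/-- Index of the largest Fibonacci number `≤ n`. -/
def topK (n : ℕ) : ℕ := Nat.findGreatest (fun k => fibW k ≤ n) n

/-- The invariant set of state pairs. -/
def Qlist : List ((ℤ × ℤ) × (ℤ × ℤ)) :=
  [((-1, -1), (0, 0)), ((-1, -1), (1, 0)), ((-1, -1), (1, 1)),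
   ((-1, 0), (0, -1)), ((-1, 0), (0, 0)), ((-1, 0), (1, 0)),
   ((0, -1), (0, 0)), ((0, -1), (0, 1)), ((0, -1), (1, 1)),
   ((0, 0), (-1, -1)), ((0, 0), (-1, 0)), ((0, 0), (0, -1)),
   ((0, 0), (0, 0)), ((0, 0), (0, 1)), ((0, 0), (1, 0)), ((0, 0), (1, 1)),
   ((0, 1), (-1, -1)), ((0, 1), (0, -1)), ((0, 1), (0, 0)),
   ((1, 0), (-1, 0)), ((1, 0), (0, 0)), ((1, 0), (0, 1)),
   ((1, 1), (-1, -1)), ((1, 1), (-1, 0)), ((1, 1), (0, 0))]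

/-- Candidate values for the next state, given previous two states `x, y`. -/
def zcand (x y : ℤ × ℤ) : List (ℤ × ℤ) :=
  [st y (rotP y), st y (st y (rotP y)), st y (st y (st y (rotP y))),
   st y (rotP (y - rotP x)), st y (st y (rotP (y - rotP x))),
   st y (st y (st y (rotP (y - rotP x))))]

lemma Qclosure : ∀ p ∈ Qlist, ∀ z ∈ zcand p.1 p.2, (p.2, z) ∈ Qlist := by decide

lemma Qprop : ∀ p ∈ Qlist, p.2.2 = 0 ∨ p.2.1 = 0 ∨ p.2.1 = p.2.2 := by decide

lemma st3 (y w : ℤ × ℤ) : st y (st y (st y w)) = w := by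
  obtain ⟨a, b⟩ := y
  obtain ⟨c, d⟩ := w
  simp only [st, rotP, Prod.mk_add_mk, Prod.mk.injEq]
  constructor <;> ring

/-! ### Combinatorial lemmas -/

lemma Fset_empty {k m : ℕ} (h : fibW (k+2) < m + 2) : Fset k m = ∅ := by
  ext S
  simp only [Fset, mem_filter, mem_powerset, Finset.notMem_empty, iff_false, not_and]
  intro hsub hsum
  have hle : ∑ j ∈ S, fibW j ≤ ∑ j ∈ Finset.Icc 1 k, fibW j :=
    Finset.sum_le_sum_of_subset hsub
  have := fibW_sum k
  omega

lemma cnt_zero {k m i : ℕ} (h : fibW (k+2) < m + 2) : cnt k m i = 0 := by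
  simp [cnt, Fset_empty h]

lemma ph_zero {k m : ℕ} (h : fibW (k+2) < m + 2) : ph k m = 0 := by
  simp [ph, cnt_zero h, Prod.ext_iff]

lemma Fset_succ_of_lt {k m : ℕ} (h : m < fibW (k+1)) : Fset (k+1) m = Fset k m := by
  ext S
  simp only [Fset, mem_filter, mem_powerset]
  constructor
  · rintro ⟨hsub, hsum⟩
    refine ⟨fun j hj => ?_, hsum⟩
    have hj1 := hsub hj
    simp only [Finset.mem_Icc] at hj1 ⊢
    have hjne : j ≠ k+1 := by
      rintro rfl
      have : fibW (k+1) ≤ ∑ j ∈ S, fibW j :=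
        Finset.single_le_sum (fun i _ => Nat.zero_le _) hj
      omega
    omega
  · rintro ⟨hsub, hsum⟩
    exact ⟨hsub.trans (Finset.Icc_subset_Icc le_rfl (by omega)), hsum⟩

lemma ph_succ_of_lt {k m : ℕ} (h : m < fibW (k+1)) : ph (k+1) m = ph k m := by
  simp [ph, cnt, Fset_succ_of_lt h]

lemma mem_Fset {k m : ℕ} {S : Finset ℕ} :
    S ∈ Fset k m ↔ S ⊆ Finset.Icc 1 k ∧ ∑ j ∈ S, fibW j = m := by
  rw [Fset, mem_filter, mem_powerset]

lemma cnt_succ (k m i : ℕ) (hi : i < 3) (h : fibW (k+1) ≤ m) :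
    cnt (k+1) m i = cnt k m i + cnt k (m - fibW (k+1) ) ((i+2) % 3) := by
  classical
  unfold cnt
  have hsplit := Finset.card_filter_add_card_filter_not
    (s := (Fset (k+1) m).filter fun S => S.card % 3 = i) (p := fun S => (k+1) ∈ S)
  rw [← hsplit, add_comm]
  congr 1
  · -- sets not containing k+1
    apply congrArg Finset.card
    ext S
    rw [mem_filter, mem_filter, mem_Fset, mem_filter, mem_Fset]
    constructor
    · rintro ⟨⟨⟨hsub, hsum⟩, hcard⟩, hmem⟩
      refine ⟨⟨fun j hj => ?_, hsum⟩, hcard⟩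
      have hj1 := hsub hj
      simp only [Finset.mem_Icc] at hj1 ⊢
      have : j ≠ k+1 := by rintro rfl; exact hmem hj
      omega
    · rintro ⟨⟨hsub, hsum⟩, hcard⟩
      have hnot : (k+1) ∉ S := fun hc => by
        have := hsub hc; simp only [Finset.mem_Icc] at this; omega
      exact ⟨⟨⟨hsub.trans (Finset.Icc_subset_Icc le_rfl (by omega)), hsum⟩, hcard⟩, hnot⟩
  · -- sets containing k+1
    refine Finset.card_bij' (fun S _ => S.erase (k+1))
      (fun T _ => insert (k+1) T) ?_ ?_ ?_ ?_
    · rintro S hS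
      rw [mem_filter, mem_filter, mem_Fset] at hS
      obtain ⟨⟨⟨hsub, hsum⟩, hcard⟩, hmem⟩ := hS
      rw [mem_filter, mem_Fset]
      have hserase : ∑ j ∈ S.erase (k+1), fibW j + fibW (k+1) = ∑ j ∈ S, fibW j :=
        Finset.sum_erase_add _ _ hmem
      have hcpos : 0 < S.card := Finset.card_pos.mpr ⟨k+1, hmem⟩
      have hce : (S.erase (k+1)).card = S.card - 1 := Finset.card_erase_of_mem hmem
      refine ⟨⟨fun j hj => ?_, by omega⟩, by omega⟩
      simp only [Finset.mem_erase] at hj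
      have h2 := hsub hj.2
      simp only [Finset.mem_Icc] at h2 ⊢
      have := hj.1
      omega
    · rintro T hT
      rw [mem_filter, mem_Fset] at hT
      obtain ⟨⟨hsub, hsum⟩, hcard⟩ := hT
      rw [mem_filter, mem_filter, mem_Fset]
      have hnot : (k+1) ∉ T := fun hc => by
        have := hsub hc; simp only [Finset.mem_Icc] at this; omega
      have hins : ∑ j ∈ insert (k+1) T, fibW j = fibW (k+1) + ∑ j ∈ T, fibW j :=
        Finset.sum_insert hnot
      have hci : (insert (k+1) T).card = T.card + 1 := Finset.card_insert_of_notMem hnot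
      refine ⟨⟨⟨fun j hj => ?_, by omega⟩, by omega⟩, Finset.mem_insert_self _ _⟩
      simp only [Finset.mem_insert] at hj
      rcases hj with rfl | hj
      · simp only [Finset.mem_Icc]; omega
      · have := hsub hj; simp only [Finset.mem_Icc] at this ⊢; omega
    · rintro S hS
      rw [mem_filter] at hS
      exact Finset.insert_erase hS.2
    · rintro T hT
      rw [mem_filter, mem_Fset] at hT
      have hnot : (k+1) ∉ T := fun hc => by
        have := hT.1.1 hc; simp only [Finset.mem_Icc] at this; omega
      exact Finset.erase_insert hnot

lemma ph_succ (k m : ℕ) (h : fibW (k+1) ≤ m) :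
    ph (k+1) m = ph k m + rotP (ph k (m - fibW (k+1))) := by
  have h0 := cnt_succ k m 0 (by norm_num) h
  have h1 := cnt_succ k m 1 (by norm_num) h
  have h2 := cnt_succ k m 2 (by norm_num) h
  norm_num at h0 h1 h2
  simp only [ph, rotP, Prod.mk_add_mk, Prod.mk.injEq, h0, h1, h2]
  push_cast
  constructor <;> ring

/-! ### Stability -/

lemma ph_stab (k j m : ℕ) (h : m < fibW (k+1)) : ph (k+j) m = ph k m := by
  induction j with
  | zero => rfl
  | succ j ih =>
    have h2 : m < fibW (k+j+1) := lt_of_lt_of_le h (fibW_mono (by omega))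
    rw [show k+(j+1) = (k+j)+1 from rfl, ph_succ_of_lt h2, ih]

lemma ph_eq_Phi {k m : ℕ} (h : m < fibW (k+1)) : ph k m = Phi m := by
  unfold Phi
  rcases le_total k m with hk | hk
  · have := ph_stab k (m-k) m h
    rw [show k + (m-k) = m by omega] at this
    exact this.symm
  · have hm : m < fibW (m+1) := lt_of_lt_of_le (by omega) (fibW_ge (m+1))
    have := ph_stab m (k-m) m hm
    rw [show m + (k-m) = k by omega] at this
    exact this

/-! ### The transfer recurrences -/

lemma chain_step (u n' : ℕ) (hn : n' < fibW (u+3)) :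
    ph (u+3) (fibW (u+3) + n') = st (Phi n') (ph (u+1) (fibW (u+1) + n')) := by
  have h1 : ph (u+3) (fibW (u+3) + n')
      = ph (u+2) (fibW (u+3) + n') + rotP (ph (u+2) (fibW (u+3) + n' - fibW (u+3))) :=
    ph_succ _ _ (Nat.le_add_right _ _)
  have e1 : fibW (u+3) + n' - fibW (u+3) = n' := by omega
  have h5 : ph (u+2) n' = Phi n' := ph_eq_Phi hn
  have hmono : fibW (u+2) ≤ fibW (u+3) := fibW_mono (by omega)
  have h2 : ph (u+2) (fibW (u+3) + n')
      = ph (u+1) (fibW (u+3) + n') + rotP (ph (u+1) (fibW (u+3) + n' - fibW (u+2))) :=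
    ph_succ _ _ (by rw [show u+1+1 = u+2 by omega]; omega)
  have h3 : ph (u+1) (fibW (u+3) + n') = 0 :=
    ph_zero (by rw [show u+1+2 = u+3 by omega]; omega)
  have e2 : fibW (u+3) + n' - fibW (u+2) = fibW (u+1) + n' := by
    have := fibW_add u; omega
  rw [h1, e1, h5, h2, h3, e2]
  simp only [st, zero_add]
  ring

lemma master (j n : ℕ) (hle : fibW (j+3) ≤ n) (hlt : n < fibW (j+4)) :
    Phi n = st (Phi (n - fibW (j+3))) (ph (j+1) (fibW (j+1) + (n - fibW (j+3)))) := by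
  set n' := n - fibW (j+3) with hn'
  have hPhin : ph (j+3) n = Phi n := ph_eq_Phi hlt
  have h1 : ph (j+3) n = ph (j+2) n + rotP (ph (j+2) (n - fibW (j+3))) := ph_succ _ _ hle
  have hmono : fibW (j+2) ≤ fibW (j+3) := fibW_mono (by omega)
  have h2 : ph (j+2) n = ph (j+1) n + rotP (ph (j+1) (n - fibW (j+2))) :=
    ph_succ _ _ (by rw [show j+1+1 = j+2 by omega]; omega)
  have h3 : ph (j+1) n = 0 :=
    ph_zero (by rw [show j+1+2 = j+3 by omega]; omega)
  have e2 : n - fibW (j+2) = fibW (j+1) + n' := by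
    have := fibW_add j; omega
  have h5 : ph (j+2) n' = Phi n' := by
    apply ph_eq_Phi
    show n' < fibW (j+3)
    have h4 : fibW (j+4) = fibW (j+3) + fibW (j+2) := fibW_add (j+1)
    omega
  rw [← hPhin, h1, h2, h3, e2, h5]
  simp only [st, zero_add]
  ring

lemma base_top (k' n' : ℕ) (h1 : 1 ≤ k') (hle : fibW k' ≤ n') (hlt : n' < fibW (k'+1)) :
    ph (k'+1) (fibW (k'+1) + n') = rotP (Phi n') := by
  have h2 : ph (k'+1) (fibW (k'+1) + n')
      = ph k' (fibW (k'+1) + n') + rotP (ph k' (fibW (k'+1) + n' - fibW (k'+1))) :=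
    ph_succ _ _ (Nat.le_add_right _ _)
  have e1 : fibW (k'+1) + n' - fibW (k'+1) = n' := by omega
  have h3 : ph k' (fibW (k'+1) + n') = 0 := by
    apply ph_zero
    obtain ⟨v, rfl⟩ : ∃ v, k' = v + 1 := ⟨k'-1, by omega⟩
    have h6 := fibW_add v
    have hle' : fibW (v+1) ≤ n' := hle
    show fibW (v+3) < fibW (v+2) + n' + 2
    omega
  have h4 : ph k' n' = Phi n' := ph_eq_Phi hlt
  rw [h2, e1, h3, h4, zero_add]

lemma base_bot (v n' : ℕ) (hle : fibW (v+1) ≤ n') :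
    ph (v+1) (fibW (v+1) + n') = rotP (ph v n') := by
  have h2 : ph (v+1) (fibW (v+1) + n')
      = ph v (fibW (v+1) + n') + rotP (ph v (fibW (v+1) + n' - fibW (v+1))) :=
    ph_succ _ _ (Nat.le_add_right _ _)
  have e1 : fibW (v+1) + n' - fibW (v+1) = n' := by omega
  have h3 : ph v (fibW (v+1) + n') = 0 := by
    apply ph_zero
    match v with
    | 0 => show fibW 2 < fibW 1 + n' + 2; simp [fibW]
    | (w+1) =>
      show fibW (w+3) < fibW (w+2) + n' + 2
      have h6 := fibW_add w
      have hle' : fibW (w+2) ≤ n' := hle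
      have hm : fibW (w+1) ≤ fibW (w+2) := fibW_mono (by omega)
      omega
  rw [h2, e1, h3, zero_add]

lemma rel_B (v n' : ℕ) (hle : fibW (v+1) ≤ n') (hlt : n' < fibW (v+2)) :
    ph v n' = Phi n' - rotP (Phi (n' - fibW (v+1))) := by
  have h1 : ph (v+1) n' = ph v n' + rotP (ph v (n' - fibW (v+1))) := ph_succ _ _ hle
  have h2 : ph (v+1) n' = Phi n' := ph_eq_Phi hlt
  have h3 : ph v (n' - fibW (v+1)) = Phi (n' - fibW (v+1)) := by
    apply ph_eq_Phi
    match v with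
    | 0 =>
      show n' - fibW 1 < fibW 1
      have h4 : fibW 1 = 1 := rfl
      have h5 : fibW 2 = 2 := rfl
      have hle' : fibW 1 ≤ n' := hle
      have hlt' : n' < fibW 2 := hlt
      omega
    | (w+1) =>
      show n' - fibW (w+2) < fibW (w+2)
      have h6 := fibW_add w
      have hle' : fibW (w+2) ≤ n' := hle
      have hlt' : n' < fibW (w+3) := hlt
      have hm : fibW (w+1) ≤ fibW (w+2) := fibW_mono (by omega)
      omega
  rw [h3] at h1
  rw [← h2, h1]
  ring

/-! ### The chain iteration -/

lemma chain_mem (n' b : ℕ) (hb : 1 ≤ b) (hn : n' < fibW (b+2)) (w0 : ℤ × ℤ)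
    (h0 : ph b (fibW b + n') = w0) :
    ∀ d, ph (b+2*d) (fibW (b+2*d) + n') = w0 ∨
         ph (b+2*d) (fibW (b+2*d) + n') = st (Phi n') w0 ∨
         ph (b+2*d) (fibW (b+2*d) + n') = st (Phi n') (st (Phi n') w0) := by
  intro d
  induction d with
  | zero => simpa using Or.inl h0
  | succ d ih =>
    obtain ⟨u, hu⟩ : ∃ u, b + 2*d = u + 1 := ⟨b + 2*d - 1, by omega⟩
    have hn2 : n' < fibW (u+3) :=
      lt_of_lt_of_le hn (fibW_mono (by omega))
    have hstep := chain_step u n' hn2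
    have he : b + 2*(d+1) = u + 3 := by omega
    rw [he, hstep, ← hu]
    rcases ih with h | h | h
    · rw [h]; exact Or.inr (Or.inl rfl)
    · rw [h]; exact Or.inr (Or.inr rfl)
    · rw [h, st3]; exact Or.inl rfl

/-! ### Facts about `topK` -/

lemma topK_spec (n : ℕ) (hn : 1 ≤ n) :
    1 ≤ topK n ∧ fibW (topK n) ≤ n ∧ n < fibW (topK n + 1) := by
  have hP1 : fibW 1 ≤ n := by simpa [fibW] using hn
  have h1 : 1 ≤ topK n := Nat.le_findGreatest hn hP1
  have h2 : fibW (topK n) ≤ n :=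
    Nat.findGreatest_spec (P := fun k => fibW k ≤ n) (m := 1) hn hP1
  have h3 : n < fibW (topK n + 1) := by
    by_contra hc
    push_neg at hc
    have hKn : topK n + 1 ≤ n := le_trans (fibW_ge _) hc
    exact Nat.findGreatest_is_greatest (lt_add_one _) hKn hc
  exact ⟨h1, h2, h3⟩

/-! ### The key induction -/

lemma key : ∀ n, 1 ≤ n → (Phi (n - fibW (topK n)), Phi n) ∈ Qlist := by
  intro n
  induction n using Nat.strong_induction_on with
  | _ n IH =>
  intro hn
  obtain ⟨hk1, hkle, hklt⟩ := topK_spec n hn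
  set k := topK n with hkdef
  set n' := n - fibW k with hn'def
  by_cases h0 : n' = 0
  · -- n = fibW k
    rw [h0]
    have hPhi0 : Phi 0 = (1, 0) := by decide
    have hneq : n = fibW k := by
      have := fibW_pos 0
      omega
    rcases lt_or_ge k 3 with hk3 | hk3
    · -- k = 1 or 2, so n = 1 or n = 2
      have hf1 : fibW 1 = 1 := rfl
      have hf2 : fibW 2 = 2 := rfl
      have hfa : fibW (1+1) = 2 := rfl
      have hfb : fibW (2+1) = 3 := rfl
      have : n = 1 ∨ n = 2 := by interval_cases k <;> omega
      rcases this with rfl | rfl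
      · rw [hPhi0]
        have : Phi 1 = (0, 1) := by decide
        rw [this]; decide
      · rw [hPhi0]
        have : Phi 2 = (0, 1) := by decide
        rw [this]; decide
    · -- k ≥ 3
      obtain ⟨j, hj⟩ : ∃ j, k = j + 3 := ⟨k - 3, by omega⟩
      have hmaster := master j n
        (by rw [show j+3 = k by omega]; exact hkle)
        (by rw [show j+4 = k+1 by omega]; exact hklt)
      have hn'0 : n - fibW (j+3) = 0 := by rw [show j+3 = k by omega]; exact h0
      rw [hn'0] at hmaster
      obtain ⟨d, hd⟩ : ∃ d, j + 1 = 1 + 2*d ∨ j + 1 = 2 + 2*d :=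
        ⟨(j+1-1)/2, by omega⟩
      have hw1 : ph 1 (fibW 1 + 0) = rotP (Phi 0) := by decide
      have hw2 : ph 2 (fibW 2 + 0) = rotP (Phi 0) := by decide
      have hmem : ph (j+1) (fibW (j+1) + 0) = rotP (Phi 0) ∨
          ph (j+1) (fibW (j+1) + 0) = st (Phi 0) (rotP (Phi 0)) ∨
          ph (j+1) (fibW (j+1) + 0) = st (Phi 0) (st (Phi 0) (rotP (Phi 0))) := by
        rcases hd with hd | hd
        · have := chain_mem 0 1 le_rfl (fibW_pos 2) _ hw1 d
          rwa [← hd] at this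
        · have := chain_mem 0 2 (by omega) (fibW_pos 3) _ hw2 d
          rwa [← hd] at this
      rw [hPhi0]
      rcases hmem with h | h | h <;> rw [hmaster, h, hPhi0] <;> decide
  · -- n' ≥ 1
    have hn'1 : 1 ≤ n' := by omega
    have hn'lt : n' < n := by
      have := fibW_pos (k-1)
      rw [show k - 1 + 1 = k by omega] at this
      omega
    have hIH := IH n' hn'lt hn'1
    obtain ⟨hk'1, hk'le, hk'lt⟩ := topK_spec n' hn'1
    set k' := topK n' with hk'def
    set n'' := n' - fibW k' with hn''def
    set x := Phi n'' with hxdef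
    set y := Phi n' with hydef
    -- k ≥ 3
    have hk3 : 3 ≤ k := by
      by_contra hc
      push_neg at hc
      have hf1 : fibW 1 = 1 := rfl
      have hf2 : fibW 2 = 2 := rfl
      have hf3 : fibW 3 = 3 := rfl
      have hfa : fibW (1+1) = 2 := rfl
      have hfb : fibW (2+1) = 3 := rfl
      interval_cases k <;> omega
    obtain ⟨j, hj⟩ : ∃ j, k = j + 3 := ⟨k - 3, by omega⟩
    -- n' < fibW (j+2), hence k' ≤ j+1
    have hfib4 : fibW (j+4) = fibW (j+3) + fibW (j+2) := fibW_add (j+1)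
    have hn'small : n' < fibW (j+2) := by
      have ha : n < fibW (j+4) := by rw [show j+4 = k+1 by omega]; exact hklt
      have hb : fibW (j+3) ≤ n := by rw [show j+3 = k by omega]; exact hkle
      have hc : n' = n - fibW (j+3) := by rw [show j+3 = k by omega]
      omega
    have hk'le' : k' ≤ j + 1 := by
      by_contra hc
      push_neg at hc
      have : fibW (j+2) ≤ fibW k' := fibW_mono (by omega)
      omega
    have hmaster := master j n
      (by rw [show j+3 = k by omega]; exact hkle)
      (by rw [show j+4 = k+1 by omega]; exact hklt)
    have hn'eq : n - fibW (j+3) = n' := by rw [show j+3 = k by omega]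
    rw [hn'eq] at hmaster
    -- base values of the chain
    obtain ⟨v, hv⟩ : ∃ v, k' = v + 1 := ⟨k' - 1, by omega⟩
    have hbase0 : ph k' (fibW k' + n') = rotP (y - rotP x) := by
      rw [hv]
      have hb := base_bot v n' (by rw [← hv]; exact hk'le)
      have hr := rel_B v n' (by rw [← hv]; exact hk'le) (by rw [show v+2 = k'+1 by omega]; exact hk'lt)
      rw [hb, hr, hydef, hxdef, hn''def, hv]
    have hbase1 : ph (k'+1) (fibW (k'+1) + n') = rotP y :=
      base_top k' n' hk'1 hk'le hk'lt
    have hnndd : n' < fibW (k' + 2) := lt_of_lt_of_le hk'lt (fibW_mono (by omega))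
    obtain ⟨d, hd⟩ : ∃ d, j + 1 = k' + 2*d ∨ j + 1 = (k'+1) + 2*d :=
      ⟨(j+1-k')/2, by omega⟩
    have hz : Phi n ∈ zcand x y := by
      rcases hd with hd | hd
      · have hmem := chain_mem n' k' hk'1 hnndd _ hbase0 d
        rw [← hd] at hmem
        rcases hmem with h | h | h <;> rw [hmaster, h] <;>
          simp [zcand, hydef]
      · have hmem := chain_mem n' (k'+1) (by omega) (lt_of_lt_of_le hnndd (fibW_mono (by omega))) _ hbase1 d
        rw [← hd] at hmem
        rcases hmem with h | h | h <;> rw [hmaster, h] <;>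
          simp [zcand, hydef]
    exact Qclosure (x, y) hIH (Phi n) hz

/-! ### Relating `r` to `cnt` -/

lemma r_eq_cnt (n i : ℕ) : r 3 i n = cnt n n i := by
  unfold r cnt
  rw [← Nat.card_eq_finsetCard]
  apply Nat.card_congr
  apply Equiv.subtypeEquivRight
  intro S
  constructor
  · rintro ⟨h1, h2, h3⟩
    rw [mem_filter, mem_Fset]
    refine ⟨⟨fun j hj => ?_, h2⟩, h3⟩
    have hj1 := h1 j hj
    have hjle : fibW j ≤ n := by
      rw [← h2]
      exact Finset.single_le_sum (fun i _ => Nat.zero_le _) hj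
    have := fibW_ge j
    simp only [Finset.mem_Icc]
    omega
  · intro h
    rw [mem_filter, mem_Fset] at h
    obtain ⟨⟨h1, h2⟩, h3⟩ := h
    refine ⟨fun j hj => ?_, h2, h3⟩
    have := h1 hj
    simp only [Finset.mem_Icc] at this
    omega

theorem two_counts_equal (n : ℕ) (hn : 0 < n) :
    ((r 3 0 n : ℤ) - r 3 1 n) * ((r 3 0 n : ℤ) - r 3 2 n) *
      ((r 3 1 n : ℤ) - r 3 2 n) = 0 := by
  have hkey := key n hn
  have hp : (Phi n).2 = 0 ∨ (Phi n).1 = 0 ∨ (Phi n).1 = (Phi n).2 := Qprop _ hkey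
  have ha : (Phi n).1 = (r 3 0 n : ℤ) - r 3 2 n := by
    simp [Phi, ph, r_eq_cnt]
  have hb : (Phi n).2 = (r 3 1 n : ℤ) - r 3 2 n := by
    simp [Phi, ph, r_eq_cnt]
  have hab : (r 3 0 n : ℤ) - r 3 1 n = (Phi n).1 - (Phi n).2 := by
    rw [ha, hb]; ring
  rcases hp with h | h | h
  · rw [← hb, h, mul_zero]
  · rw [← ha, h, mul_zero, zero_mul]
  · rw [hab, h, sub_self, zero_mul, zero_mul]
end
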